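/- Let X, Z be finite sets, μ, ν probability measures with full support on X, Z, c a cost, and ε > 0. For any coupling π of μ and ν absolutely continuous w.r.t. μ ⊗ ν and any potentials u: X → R, v: Z → R, the primal objective Σ c π + ε D_KL(π ‖ μ⊗ν) is at least the dual objective Σ_x u(x)μ(x) + Σ_z v(z)ν(z) - ε Σ_{x,z} exp((u(x)+v(z)-c(x,z))/ε) μ(x)ν(z) + ε (weak duality for entropic OT, up to the additive constant ε). -/
import Mathlib

open Real

lemma key_ineq (a b t : ℝ) (ha : 0 ≤ a) (hb : 0 < b) :
    a * t + a - b * Real.exp t ≤ a * Real.log (a / b) := by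
  rcases eq_or_lt_of_le ha with h | h
  · rw [← h]
    have := Real.exp_pos t
    nlinarith
  · have h1 : t - Real.log (a / b) + 1 ≤ Real.exp (t - Real.log (a / b)) :=
      Real.add_one_le_exp _
    have h2 : Real.exp (t - Real.log (a / b)) = Real.exp t * (b / a) := by
      rw [Real.exp_sub, Real.exp_log (div_pos h hb)]
      field_simp
    rw [h2] at h1
    have h3 := mul_le_mul_of_nonneg_left h1 h.le
    have h4 : a * (Real.exp t * (b / a)) = b * Real.exp t := by
      field_simp
    rw [h4] at h3
    nlinarith

/-- Weak duality for entropic OT: for any coupling `P` of `μ, ν` and any potentials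
`u, v`, the primal objective dominates the dual objective plus `ε`. -/
theorem stmt_15 {X Z : Type*} [Fintype X] [Fintype Z]
    (μ : X → ℝ) (ν : Z → ℝ) (c : X → Z → ℝ) (ε : ℝ) (hε : 0 < ε)
    (hμ0 : ∀ x, 0 < μ x) (hμ1 : ∑ x, μ x = 1)
    (hν0 : ∀ z, 0 < ν z) (hν1 : ∑ z, ν z = 1)
    (P : X → Z → ℝ)
    (hP0 : ∀ x z, 0 ≤ P x z)
    (hm1 : ∀ x, ∑ z, P x z = μ x)
    (hm2 : ∀ z, ∑ x, P x z = ν z)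
    (u : X → ℝ) (v : Z → ℝ) :
    (∑ x, u x * μ x) + (∑ z, v z * ν z) -
      ε * (∑ x, ∑ z, Real.exp ((u x + v z - c x z) / ε) * μ x * ν z) + ε ≤
    (∑ x, ∑ z, c x z * P x z) +
      ε * (∑ x, ∑ z, P x z * Real.log (P x z / (μ x * ν z))) := by
  have main : ∀ x z,
      u x * P x z + v z * P x z - c x z * P x z + ε * P x z -
        ε * (Real.exp ((u x + v z - c x z) / ε) * μ x * ν z) ≤
      ε * (P x z * Real.log (P x z / (μ x * ν z))) := by
    intro x z
    have hb : 0 < μ x * ν z := mul_pos (hμ0 x) (hν0 z)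
    have hk := key_ineq (P x z) (μ x * ν z) ((u x + v z - c x z) / ε) (hP0 x z) hb
    have hmul := mul_le_mul_of_nonneg_left hk hε.le
    have h5 : ε * (P x z * ((u x + v z - c x z) / ε)) =
        u x * P x z + v z * P x z - c x z * P x z := by
      field_simp
    rw [mul_sub, mul_add, h5] at hmul
    have h6 : ε * (μ x * ν z * Real.exp ((u x + v z - c x z) / ε)) =
        ε * (Real.exp ((u x + v z - c x z) / ε) * μ x * ν z) := by ring
    linarith [hmul, h6]
  have big := Finset.sum_le_sum (fun x (_ : x ∈ Finset.univ) =>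
    Finset.sum_le_sum (fun z (_ : z ∈ Finset.univ) => main x z))
  have e1 : ∑ x, ∑ z, u x * P x z = ∑ x, u x * μ x := by
    refine Finset.sum_congr rfl fun x _ => ?_
    rw [← Finset.mul_sum, hm1]
  have e2 : ∑ x, ∑ z, v z * P x z = ∑ z, v z * ν z := by
    rw [Finset.sum_comm]
    refine Finset.sum_congr rfl fun z _ => ?_
    rw [← Finset.mul_sum, hm2]
  have e3 : ∑ x, ∑ z, P x z = (1 : ℝ) := by
    simp [hm1, hμ1]
  have lhs_eq : ∑ x, ∑ z,
      (u x * P x z + v z * P x z - c x z * P x z + ε * P x z -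
        ε * (Real.exp ((u x + v z - c x z) / ε) * μ x * ν z)) =
      (∑ x, ∑ z, u x * P x z) + (∑ x, ∑ z, v z * P x z) -
      (∑ x, ∑ z, c x z * P x z) + ε * (∑ x, ∑ z, P x z) -
      ε * (∑ x, ∑ z, Real.exp ((u x + v z - c x z) / ε) * μ x * ν z) := by
    simp [Finset.sum_add_distrib, Finset.sum_sub_distrib, Finset.mul_sum]
  have rhs_eq : ∑ x, ∑ z, ε * (P x z * Real.log (P x z / (μ x * ν z))) =
      ε * (∑ x, ∑ z, P x z * Real.log (P x z / (μ x * ν z))) := by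
    simp [Finset.mul_sum]
  rw [lhs_eq, rhs_eq, e1, e2, e3] at big
  linarith
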